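/- Let τ in the upper half plane, and set α = θ00(τ)θ10(τ), β = θ10(τ)², γ = θ00(τ)θ10(τ), δ = θ00(τ)². Then α²δ² − β²γ² = χ₁(τ)²·θ01(τ)² and γ²δ² − α²β² = χ₁(τ)²·θ01(τ)², where χ₁(τ) = θ00(τ)θ10(τ)θ01(τ). -/

import Mathlib

open Complex

noncomputable def theta00 (τ : ℂ) : ℂ := ∑' n : ℤ, Complex.exp (Real.pi * I * τ * (n : ℂ) ^ 2)

noncomputable def theta10 (τ : ℂ) : ℂ :=
  ∑' n : ℤ, Complex.exp (Real.pi * I * τ * ((n : ℂ) + 1 / 2) ^ 2)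

noncomputable def theta01 (τ : ℂ) : ℂ :=
  ∑' n : ℤ, (-1 : ℂ) ^ n * Complex.exp (Real.pi * I * τ * (n : ℂ) ^ 2)

noncomputable def chi1 (τ : ℂ) : ℂ := theta00 τ * theta10 τ * theta01 τ

/-!
Jacobi's identity `θ00⁴ = θ10⁴ + θ01⁴` follows from the duplication formulas
`θ00(τ)² = θ00(2τ)² + θ10(2τ)²`, `θ01(τ)² = θ00(2τ)² − θ10(2τ)²`, `θ10(τ)² = 2 θ00(2τ) θ10(2τ)`,
because `(A² + B²)² = (2AB)² + (A² − B²)²`. All three are instances of one product formula for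
theta constants with characteristics: split the double sum over `(m, n)` by the parity of `m + n`
and substitute `m = x + y (+ 1)`, `n = x − y`, which turns `(m + a)² + (n + a')²` into
`2 (x + ·)² + 2 (y + ·)²`. Both claimed identities are `θ00² θ10²` times Jacobi's identity.
-/

open Real

section ParitySplit

variable {α : Type*} [UniformSpace α] [AddCommGroup α] [IsUniformAddGroup α] [CompleteSpace α]
  [T2Space α]

def evenSumEquiv : ℤ × ℤ ≃ {p : ℤ × ℤ | (p.1 + p.2) % 2 = 0} where
  toFun p := ⟨(p.1 + p.2, p.1 - p.2), by simp only [Set.mem_ofPred_eq]; omega⟩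
  invFun p := ((p.1.1 + p.1.2) / 2, (p.1.1 - p.1.2) / 2)
  left_inv := by rintro ⟨a, b⟩; ext <;> simp <;> omega
  right_inv := by
    rintro ⟨⟨m, n⟩, h : (m + n) % 2 = 0⟩
    ext <;> simp <;> omega

def oddSumEquiv : ℤ × ℤ ≃ ↥{p : ℤ × ℤ | (p.1 + p.2) % 2 = 0}ᶜ where
  toFun p := ⟨(p.1 + p.2 + 1, p.1 - p.2), by
    simp only [Set.mem_compl_iff, Set.mem_ofPred_eq]; omega⟩
  invFun p := ((p.1.1 + p.1.2 - 1) / 2, (p.1.1 - p.1.2 - 1) / 2)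
  left_inv := by rintro ⟨a, b⟩; ext <;> simp <;> omega
  right_inv := by
    rintro ⟨⟨m, n⟩, h : ¬(m + n) % 2 = 0⟩
    ext <;> simp <;> omega

theorem Summable.tsum_int_prod_eq_add_sub {F : ℤ × ℤ → α} (hF : Summable F) :
    ∑' p, F p = ∑' p : ℤ × ℤ, F (p.1 + p.2, p.1 - p.2)
      + ∑' p : ℤ × ℤ, F (p.1 + p.2 + 1, p.1 - p.2) := by
  rw [← hF.tsum_subtype_add_tsum_subtype_compl {p : ℤ × ℤ | (p.1 + p.2) % 2 = 0}]
  exact congr_arg₂ (· + ·) (evenSumEquiv.tsum_eq (F ·)).symm (oddSumEquiv.tsum_eq (F ·)).symm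

end ParitySplit

noncomputable def thetaTerm (a b τ : ℂ) (n : ℤ) : ℂ :=
  cexp (π * I * τ * (n + a) ^ 2 + 2 * π * I * (n + a) * b)

noncomputable def thetaChar (a b τ : ℂ) : ℂ := ∑' n : ℤ, thetaTerm a b τ n

section ThetaCharacteristics

variable (a b τ : ℂ)

theorem thetaTerm_eq_mul_jacobiTheta₂_term (n : ℤ) :
    thetaTerm a b τ n = cexp (π * I * τ * a ^ 2 + 2 * π * I * a * b) *
      jacobiTheta₂_term n (a * τ + b) τ := by
  rw [thetaTerm, jacobiTheta₂_term, ← Complex.exp_add]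
  ring_nf

theorem thetaTerm_add_one (n : ℤ) : thetaTerm a b τ (n + 1) = thetaTerm (a + 1) b τ n := by
  simp only [thetaTerm]; push_cast; ring_nf

theorem thetaTerm_add_mul_thetaTerm_sub (a' b' : ℂ) (x y : ℤ) :
    thetaTerm a b τ (x + y) * thetaTerm a' b' τ (x - y) =
      thetaTerm ((a + a') / 2) (b + b') (2 * τ) x *
        thetaTerm ((a - a') / 2) (b - b') (2 * τ) y := by
  simp only [thetaTerm, ← Complex.exp_add]; push_cast; ring_nf

theorem thetaChar_add_one_left : thetaChar (a + 1) b τ = thetaChar a b τ := by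
  simp only [thetaChar, ← thetaTerm_add_one]
  exact (Equiv.addRight 1).tsum_eq (thetaTerm a b τ)

theorem thetaChar_add_one_right :
    thetaChar a (b + 1) τ = cexp (2 * π * I * a) * thetaChar a b τ := by
  rw [thetaChar, thetaChar, ← tsum_mul_left]
  refine tsum_congr fun n => ?_
  calc thetaTerm a (b + 1) τ n
      = cexp (n * (2 * π * I)) * (cexp (2 * π * I * a) * thetaTerm a b τ n) := by
        simp only [thetaTerm, ← Complex.exp_add]; ring_nf
    _ = cexp (2 * π * I * a) * thetaTerm a b τ n := by
        rw [Complex.exp_int_mul_two_pi_mul_I, one_mul]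

end ThetaCharacteristics

theorem summable_norm_thetaTerm (a b : ℂ) {τ : ℂ} (hτ : 0 < τ.im) :
    Summable fun n => ‖thetaTerm a b τ n‖ :=
  summable_norm_iff.mpr <| (((summable_jacobiTheta₂_term_iff _ τ).mpr hτ).mul_left _).congr
    fun n => (thetaTerm_eq_mul_jacobiTheta₂_term a b τ n).symm

theorem thetaChar_mul_thetaChar {τ : ℂ} (hτ : 0 < τ.im) (a b a' b' : ℂ) :
    thetaChar a b τ * thetaChar a' b' τ =
      thetaChar ((a + a') / 2) (b + b') (2 * τ) * thetaChar ((a - a') / 2) (b - b') (2 * τ) +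
      thetaChar ((a + 1 + a') / 2) (b + b') (2 * τ) *
        thetaChar ((a + 1 - a') / 2) (b - b') (2 * τ) := by
  have h2τ : 0 < (2 * τ).im := by simpa using hτ
  simp only [thetaChar]
  rw [tsum_mul_tsum_of_summable_norm (summable_norm_thetaTerm a b hτ)
      (summable_norm_thetaTerm a' b' hτ),
    (summable_mul_of_summable_norm (summable_norm_thetaTerm a b hτ)
      (summable_norm_thetaTerm a' b' hτ)).tsum_int_prod_eq_add_sub]
  simp only [thetaTerm_add_one, thetaTerm_add_mul_thetaTerm_sub]
  rw [tsum_mul_tsum_of_summable_norm (summable_norm_thetaTerm _ _ h2τ)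
      (summable_norm_thetaTerm _ _ h2τ),
    tsum_mul_tsum_of_summable_norm (summable_norm_thetaTerm _ _ h2τ)
      (summable_norm_thetaTerm _ _ h2τ)]

theorem theta00_eq_thetaChar (τ : ℂ) : theta00 τ = thetaChar 0 0 τ := by
  simp [theta00, thetaChar, thetaTerm]

theorem theta10_eq_thetaChar (τ : ℂ) : theta10 τ = thetaChar (1 / 2) 0 τ := by
  simp [theta10, thetaChar, thetaTerm]

theorem theta01_eq_thetaChar (τ : ℂ) : theta01 τ = thetaChar 0 (1 / 2) τ := by
  refine tsum_congr fun n => ?_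
  rw [thetaTerm, add_zero, Complex.exp_add, ← Complex.exp_pi_mul_I, ← Complex.exp_int_mul,
    mul_comm]
  ring_nf

theorem theta00_sq {τ : ℂ} (hτ : 0 < τ.im) :
    theta00 τ ^ 2 = theta00 (2 * τ) ^ 2 + theta10 (2 * τ) ^ 2 := by
  rw [sq, theta00_eq_thetaChar, thetaChar_mul_thetaChar hτ, theta00_eq_thetaChar,
    theta10_eq_thetaChar]
  norm_num only
  ring

theorem theta01_sq {τ : ℂ} (hτ : 0 < τ.im) :
    theta01 τ ^ 2 = theta00 (2 * τ) ^ 2 - theta10 (2 * τ) ^ 2 := by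
  rw [sq, theta01_eq_thetaChar, thetaChar_mul_thetaChar hτ, theta00_eq_thetaChar,
    theta10_eq_thetaChar]
  norm_num only
  have h0 : thetaChar 0 1 (2 * τ) = thetaChar 0 0 (2 * τ) := by
    simpa using thetaChar_add_one_right 0 0 (2 * τ)
  have hhalf : thetaChar (1 / 2) 1 (2 * τ) = -thetaChar (1 / 2) 0 (2 * τ) := by
    have := thetaChar_add_one_right (1 / 2) 0 (2 * τ)
    rwa [zero_add, show 2 * π * I * (1 / 2) = π * I by ring, Complex.exp_pi_mul_I,
      neg_one_mul] at this
  rw [h0, hhalf]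
  ring

theorem theta10_sq {τ : ℂ} (hτ : 0 < τ.im) :
    theta10 τ ^ 2 = 2 * theta00 (2 * τ) * theta10 (2 * τ) := by
  rw [sq, theta10_eq_thetaChar, thetaChar_mul_thetaChar hτ, theta00_eq_thetaChar,
    theta10_eq_thetaChar]
  norm_num only
  have h1 : thetaChar 1 0 (2 * τ) = thetaChar 0 0 (2 * τ) := by
    simpa using thetaChar_add_one_left 0 0 (2 * τ)
  rw [h1]
  ring

theorem theta00_pow_four {τ : ℂ} (hτ : 0 < τ.im) :
    theta00 τ ^ 4 = theta10 τ ^ 4 + theta01 τ ^ 4 := by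
  set A := theta00 (2 * τ)
  set B := theta10 (2 * τ)
  calc theta00 τ ^ 4 = (theta00 τ ^ 2) ^ 2 := by ring
    _ = (A ^ 2 + B ^ 2) ^ 2 := by rw [theta00_sq hτ]
    _ = (2 * A * B) ^ 2 + (A ^ 2 - B ^ 2) ^ 2 := by ring
    _ = (theta10 τ ^ 2) ^ 2 + (theta01 τ ^ 2) ^ 2 := by rw [theta10_sq hτ, theta01_sq hτ]
    _ = theta10 τ ^ 4 + theta01 τ ^ 4 := by ring

/-- (A.13)-(A.14): with `α = θ00 θ10`, `β = θ10²`, `γ = θ00 θ10`, `δ = θ00²`, one has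
`α²δ² − β²γ² = χ₁² θ01²` and `γ²δ² − α²β² = χ₁² θ01²`. -/
theorem kummer_coefficient_specialization (τ : ℂ) (hτ : 0 < τ.im) :
    (theta00 τ * theta10 τ) ^ 2 * (theta00 τ ^ 2) ^ 2
        - (theta10 τ ^ 2) ^ 2 * (theta00 τ * theta10 τ) ^ 2
      = chi1 τ ^ 2 * theta01 τ ^ 2 ∧
    (theta00 τ * theta10 τ) ^ 2 * (theta00 τ ^ 2) ^ 2
        - (theta00 τ * theta10 τ) ^ 2 * (theta10 τ ^ 2) ^ 2
      = chi1 τ ^ 2 * theta01 τ ^ 2 := by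
  rw [chi1]
  constructor <;> linear_combination (theta00 τ * theta10 τ) ^ 2 * theta00_pow_four hτ
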